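/- arXiv:1602.07072 — 5 statements merged into one kernel-verified Lean document; each statement's English description precedes it below -/
import Mathlib

section
/- Time inequality (reversed triangle inequality) for the timelike Funk metric: for all p, q, r ∈ Ω with p < q and q < r (so that also p < r), F(p,q) + F(q,r) ≤ F(p,r). -/
open RealInnerProductSpace
open scoped Classical

noncomputable section

/-- Euclidean space of dimension `n`. -/
abbrev Euc (n : ℕ) := EuclideanSpace ℝ (Fin n)

/-- The exterior `Ω = E \ closure I` of the convex set `I`. -/
def Omega {n : ℕ} (I : Set (Euc n)) : Set (Euc n) := (closure I)ᶜ

/-- The timelike Funk partial order: `p < q` iff `p ≠ q`, the segment `[p,q]` lies in `Ω`,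
and the ray from `p` through `q` enters `I` beyond `q`. -/
def funkLt {n : ℕ} (I : Set (Euc n)) (p q : Euc n) : Prop :=
  p ≠ q ∧ segment ℝ p q ⊆ Omega I ∧ ∃ t > (0:ℝ), q + t • (q - p) ∈ I

/-- The parameter at which the ray from `p` through `q` first hits `closure I` (beyond `q`). -/
def funkT0 {n : ℕ} (I : Set (Euc n)) (p q : Euc n) : ℝ :=
  sInf {t : ℝ | 0 < t ∧ q + t • (q - p) ∈ closure I}

/-- The point `b(p,q)` where the ray from `p` through `q` first hits `K = frontier I`. -/
def funkB {n : ℕ} (I : Set (Euc n)) (p q : Euc n) : Euc n :=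
  q + funkT0 I p q • (q - p)

/-- The timelike Funk metric `F(p,q) = log (dist p b(p,q) / dist q b(p,q))`, with `F(p,p) = 0`. -/
def funkF {n : ℕ} (I : Set (Euc n)) (p q : Euc n) : ℝ :=
  if p = q then 0 else Real.log (dist p (funkB I p q) / dist q (funkB I p q))

/-- Supporting hyperplanes of `I`, encoded as pairs `(u, c)` with `‖u‖ = 1`:
`I ⊆ {x | ⟪u,x⟫ < c}` and `closure I` meets `{x | ⟪u,x⟫ = c}`. -/
def SuppH {n : ℕ} (I : Set (Euc n)) : Set (Euc n × ℝ) :=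
  {uc | ‖uc.1‖ = 1 ∧ I ⊆ {x | ⟪uc.1, x⟫ < uc.2} ∧
    (closure I ∩ {x | ⟪uc.1, x⟫ = uc.2}).Nonempty}

/-- `𝒫(z)`: supporting hyperplanes of `I` separating `z` from `I`. -/
def SuppHSep {n : ℕ} (I : Set (Euc n)) (z : Euc n) : Set (Euc n × ℝ) :=
  {uc | uc ∈ SuppH I ∧ uc.2 < ⟪uc.1, z⟫}

/-- `D(p)`: the cone of timelike directions at `p`. -/
def Dcone {n : ℕ} (I : Set (Euc n)) (p : Euc n) : Set (Euc n) :=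
  {v | ∃ t > (0:ℝ), p + t • v ∈ I}

/-- `τ(p,v)`: the time for the ray `p + t • v` to reach `closure I`. -/
def tauF {n : ℕ} (I : Set (Euc n)) (p v : Euc n) : ℝ :=
  sInf {t : ℝ | 0 < t ∧ p + t • v ∈ closure I}

/-- The timelike Minkowski functional `P(p,v) = 1/τ(p,v)` of the timelike Funk metric. -/
def Pmink {n : ℕ} (I : Set (Euc n)) (p v : Euc n) : ℝ := 1 / tauF I p v

/-!
For an open half-space `H = {x | f x < c}` the Funk metric is `log ((f p - c) / (f q - c))`,
which telescopes exactly along `p, q, r`. If `I ⊆ H`, the ray from `p` through `q` crosses `∂H`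
no later than it reaches `closure I`, so `F_I ≤ F_H`; for `H` supporting `I` at `b(p,r)`
(Hahn–Banach) the two crossings coincide and `F_I(p,r) = F_H(p,r)`.
-/

section FirstHit

variable {X : Type*} [TopologicalSpace X] {g : ℝ → X} {C : Set X}

theorem csInf_pos_hit_mem (hg : Continuous g) (hC : IsClosed C) (h0 : g 0 ∉ C)
    (hne : {t : ℝ | 0 < t ∧ g t ∈ C}.Nonempty) :
    sInf {t : ℝ | 0 < t ∧ g t ∈ C} ∈ {t : ℝ | 0 < t ∧ g t ∈ C} := by
  have hS : {t : ℝ | 0 < t ∧ g t ∈ C} = Set.Ici 0 ∩ g ⁻¹' C := by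
    ext t
    refine ⟨fun ht => ⟨ht.1.le, ht.2⟩, fun ⟨ht0, htC⟩ => ⟨ht0.lt_of_ne ?_, htC⟩⟩
    rintro rfl
    exact h0 htC
  rw [hS] at hne ⊢
  exact (isClosed_Ici.inter (hC.preimage hg)).csInf_mem hne ⟨0, fun _ ht => ht.1⟩

theorem map_csInf_pos_hit_notMem_interior (hg : Continuous g) (h0 : g 0 ∉ interior C) :
    g (sInf {t : ℝ | 0 < t ∧ g t ∈ C}) ∉ interior C := by
  set T := sInf {t : ℝ | 0 < t ∧ g t ∈ C}
  intro hT
  rcases (Real.sInf_nonneg fun _ ht => ht.1.le : 0 ≤ T).eq_or_lt with hT0 | hT0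
  · exact h0 (hT0 ▸ hT)
  have hpre : g ⁻¹' interior C ∈ nhds T :=
    hg.continuousAt.preimage_mem_nhds (isOpen_interior.mem_nhds hT)
  obtain ⟨t, ⟨ht0, htT⟩, htC⟩ := Filter.nonempty_of_mem
    (Filter.inter_mem (Ioo_mem_nhdsLT hT0) (nhdsWithin_le_nhds hpre))
  exact htT.not_ge (csInf_le ⟨0, fun _ ht => ht.1.le⟩ ⟨ht0, interior_subset htC⟩)

end FirstHit

theorem ContinuousLinearMap.map_add_smul_sub {E : Type*} [AddCommGroup E] [Module ℝ E]
    [TopologicalSpace E] (f : E →L[ℝ] ℝ) (p q : E) (t : ℝ) :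
    f (q + t • (q - p)) = f q + t * (f q - f p) := by
  simp [smul_eq_mul]

/-- The Funk metric of the half-space `{x | f x < c}`. -/
def halfSpaceFunk {n : ℕ} (f : Euc n →L[ℝ] ℝ) (c : ℝ) (p q : Euc n) : ℝ :=
  Real.log ((f p - c) / (f q - c))

theorem funkT0_le {n : ℕ} {I : Set (Euc n)} {p q : Euc n} {t : ℝ} (ht : 0 < t)
    (htI : q + t • (q - p) ∈ closure I) : funkT0 I p q ≤ t :=
  csInf_le ⟨0, fun _ hs => hs.1.le⟩ ⟨ht, htI⟩

theorem halfSpaceFunk_add {n : ℕ} {f : Euc n →L[ℝ] ℝ} {c : ℝ} {p q r : Euc n}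
    (hp : c < f p) (hq : c < f q) (hr : c < f r) :
    halfSpaceFunk f c p q + halfSpaceFunk f c q r = halfSpaceFunk f c p r := by
  have hp' : 0 < f p - c := sub_pos.2 hp
  have hq' : 0 < f q - c := sub_pos.2 hq
  have hr' : 0 < f r - c := sub_pos.2 hr
  rw [halfSpaceFunk, halfSpaceFunk, halfSpaceFunk,
    ← Real.log_mul (div_pos hp' hq').ne' (div_pos hq' hr').ne']
  congr 1
  field_simp

namespace funkLt

variable {n : ℕ} {I : Set (Euc n)} {p q r : Euc n}

theorem right_mem_omega (hpq : funkLt I p q) : q ∈ Omega I :=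
  hpq.2.1 (right_mem_segment ℝ p q)

theorem funkT0_pos_and_funkB_mem_closure (hpq : funkLt I p q) :
    0 < funkT0 I p q ∧ funkB I p q ∈ closure I := by
  obtain ⟨t, ht, htI⟩ := hpq.2.2
  have hq : q ∉ closure I := hpq.right_mem_omega
  exact csInf_pos_hit_mem (by fun_prop) isClosed_closure (by simpa using hq)
    ⟨t, ht, subset_closure htI⟩

theorem funkB_notMem (hop : IsOpen I) (hpq : funkLt I p q) : funkB I p q ∉ I := fun hb =>
  map_csInf_pos_hit_notMem_interior (g := fun t : ℝ => q + t • (q - p)) (by fun_prop)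
    (by simpa using fun h => hpq.right_mem_omega (interior_subset h))
    (hop.subset_interior_closure hb)

theorem funkF_eq_log (hpq : funkLt I p q) :
    funkF I p q = Real.log ((1 + funkT0 I p q) / funkT0 I p q) := by
  have hT := hpq.funkT0_pos_and_funkB_mem_closure.1
  set T := funkT0 I p q
  have hnorm : ‖q - p‖ ≠ 0 := norm_ne_zero_iff.2 (sub_ne_zero.2 hpq.1.symm)
  have hpb : p - funkB I p q = -((1 + T) • (q - p)) := by rw [funkB]; module
  have hqb : q - funkB I p q = -(T • (q - p)) := by rw [funkB]; module
  rw [funkF, if_neg hpq.1, dist_eq_norm, dist_eq_norm, hpb, hqb, norm_neg, norm_neg,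
    norm_smul, norm_smul, Real.norm_eq_abs, Real.norm_eq_abs, abs_of_pos (by linarith),
    abs_of_pos hT, mul_div_mul_right _ _ hnorm]

theorem map_lt_map {f : Euc n →L[ℝ] ℝ} {c : ℝ} (hpq : funkLt I p q)
    (hfI : ∀ x ∈ I, f x < c) (hcq : c ≤ f q) : f q < f p := by
  obtain ⟨-, -, t, ht, htI⟩ := hpq
  have := hfI _ htI
  rw [f.map_add_smul_sub] at this
  nlinarith

theorem map_funkB_lt_map {f : Euc n →L[ℝ] ℝ} (hpq : funkLt I p q)
    (hfI : ∀ x ∈ I, f x < f (funkB I p q)) : f (funkB I p q) < f q := by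
  obtain ⟨hT, -⟩ := hpq.funkT0_pos_and_funkB_mem_closure
  obtain ⟨-, -, t, ht, htI⟩ := hpq
  have hTt := funkT0_le ht (subset_closure htI)
  have := hfI _ htI
  rw [f.map_add_smul_sub, funkB, f.map_add_smul_sub] at this
  rw [funkB, f.map_add_smul_sub]
  nlinarith

theorem funkF_le_halfSpaceFunk {f : Euc n →L[ℝ] ℝ} {c : ℝ} (hpq : funkLt I p q)
    (hfI : ∀ x ∈ I, f x < c) (hcq : c < f q) : funkF I p q ≤ halfSpaceFunk f c p q := by
  obtain ⟨hT, hb⟩ := hpq.funkT0_pos_and_funkB_mem_closure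
  have hqp := hpq.map_lt_map hfI hcq.le
  have hbc : f (funkB I p q) ≤ c :=
    closure_minimal (fun x hx => (hfI x hx).le) (isClosed_le f.continuous continuous_const) hb
  rw [funkB, f.map_add_smul_sub] at hbc
  rw [hpq.funkF_eq_log, halfSpaceFunk]
  refine Real.log_le_log (div_pos (by linarith) hT) ?_
  rw [div_le_div_iff₀ hT (sub_pos.2 hcq)]
  nlinarith

theorem funkF_eq_halfSpaceFunk {f : Euc n →L[ℝ] ℝ} (hpq : funkLt I p q)
    (hfI : ∀ x ∈ I, f x < f (funkB I p q)) :
    funkF I p q = halfSpaceFunk f (f (funkB I p q)) p q := by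
  have hT := hpq.funkT0_pos_and_funkB_mem_closure.1
  have hbq := hpq.map_funkB_lt_map hfI
  rw [funkB, f.map_add_smul_sub] at hbq ⊢
  rw [hpq.funkF_eq_log, halfSpaceFunk]
  congr 1
  rw [div_eq_div_iff hT.ne' (by linarith)]
  ring

theorem trans_ne (hconv : Convex ℝ I) (hpq : funkLt I p q) (hqr : funkLt I q r) :
    p ≠ r := by
  obtain ⟨t, ht, htI⟩ := hpq.2.2
  obtain ⟨-, -, s, hs, hsI⟩ := hqr
  rintro rfl
  have hq : q = ((s + 1) / (t + s + 1)) • (q + t • (q - p)) +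
      (t / (t + s + 1)) • (p + s • (p - q)) := by
    match_scalars <;> field_simp <;> ring
  refine hpq.right_mem_omega (subset_closure ?_)
  rw [hq]
  exact hconv htI hsI (by positivity) (by positivity) (by field_simp; ring)

theorem trans_exists_ray (hconv : Convex ℝ I) (hpq : funkLt I p q) (hqr : funkLt I q r) :
    ∃ u > (0 : ℝ), r + u • (r - p) ∈ I := by
  obtain ⟨-, -, t, ht, htI⟩ := hpq
  obtain ⟨-, -, s, hs, hsI⟩ := hqr
  refine ⟨s * t / (1 + t + s), by positivity, ?_⟩
  have hr : r + (s * t / (1 + t + s)) • (r - p) =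
      (s / (1 + t + s)) • (q + t • (q - p)) + ((1 + t) / (1 + t + s)) • (r + s • (r - q)) := by
    match_scalars <;> field_simp <;> ring
  rw [hr]
  exact hconv htI hsI (by positivity) (by positivity) (by field_simp; ring)

/-- If `a p + b r ∈ closure I`, then the segment from it to `q + t (q - p) ∈ I` crosses `[q, r]`
inside `closure I`. -/
theorem trans_segment_subset (hconv : Convex ℝ I) (hpq : funkLt I p q)
    (hqr : funkLt I q r) : segment ℝ p r ⊆ Omega I := by
  obtain ⟨-, -, t, ht, htI⟩ := hpq
  rintro x ⟨a, b, ha, hb, hab, rfl⟩ hx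
  have hat : 0 < a + t := by linarith
  obtain ⟨μ, hμ0, hμ1, hμ⟩ : ∃ μ : ℝ, 0 ≤ μ ∧ μ ≤ 1 ∧ μ * (a + t) = a :=
    ⟨a / (a + t), by positivity, (div_le_one hat).2 (by linarith), div_mul_cancel₀ a hat.ne'⟩
  have hy : μ • (q + t • (q - p)) + (1 - μ) • (a • p + b • r) =
      (μ * (1 + t)) • q + ((1 - μ) * b) • r := by
    match_scalars
    · ring
    · linear_combination -hμ
    · ring
  have hsum : μ * (1 + t) + (1 - μ) * b = 1 := by
    linear_combination hμ + (1 - μ) * hab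
  refine hqr.2.1 ⟨μ * (1 + t), (1 - μ) * b, by positivity, by nlinarith, hsum, rfl⟩ ?_
  rw [← hy]
  exact hconv.closure (subset_closure htI) hx (by positivity) (by linarith) (by ring)

theorem trans (hconv : Convex ℝ I) (hpq : funkLt I p q) (hqr : funkLt I q r) :
    funkLt I p r :=
  ⟨trans_ne hconv hpq hqr, trans_segment_subset hconv hpq hqr,
    trans_exists_ray hconv hpq hqr⟩

end funkLt

theorem funkF_time_inequality_general {n : ℕ} (I : Set (Euc n))
    (hop : IsOpen I) (hconv : Convex ℝ I)
    (p q r : Euc n)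
    (hpq : funkLt I p q) (hqr : funkLt I q r) :
    funkLt I p r ∧ funkF I p q + funkF I q r ≤ funkF I p r := by
  have hpr := hpq.trans hconv hqr
  refine ⟨hpr, ?_⟩
  obtain ⟨f, hf⟩ := geometric_hahn_banach_open_point hconv hop (hpr.funkB_notMem hop)
  set c := f (funkB I p r)
  have hcr : c < f r := hpr.map_funkB_lt_map hf
  have hcq : c < f q := hcr.trans (hqr.map_lt_map hf hcr.le)
  have hcp : c < f p := hcq.trans (hpq.map_lt_map hf hcq.le)
  calc funkF I p q + funkF I q r
      ≤ halfSpaceFunk f c p q + halfSpaceFunk f c q r :=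
        add_le_add (hpq.funkF_le_halfSpaceFunk hf hcq) (hqr.funkF_le_halfSpaceFunk hf hcr)
    _ = halfSpaceFunk f c p r := halfSpaceFunk_add hcp hcq hcr
    _ = funkF I p r := (hpr.funkF_eq_halfSpaceFunk hf).symm

/-- the time inequality (reversed triangle inequality) for the timelike
Funk metric: if `p < q` and `q < r`, then `F(p,q) + F(q,r) ≤ F(p,r)`. -/
theorem funkF_time_inequality {n : ℕ} (hn : 1 ≤ n) (I : Set (Euc n))
    (hne : I.Nonempty) (hop : IsOpen I) (hconv : Convex ℝ I)
    (hcl : closure I ≠ Set.univ)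
    (p q r : Euc n) (hp : p ∈ Omega I) (hq : q ∈ Omega I) (hr : r ∈ Omega I)
    (hpq : funkLt I p q) (hqr : funkLt I q r) :
    funkLt I p r ∧ funkF I p q + funkF I q r ≤ funkF I p r :=
  funkF_time_inequality_general I hop hconv p q r hpq hqr
end
end

section
/- A Euclidean ray toward the boundary is isometric to a Euclidean half-line: let p, q ∈ Ω with p < q and b = b(p,q). For all real numbers 0 ≤ s < t < 1, setting x = p + s • (b − p) and y = p + t • (b − p), we have x, y ∈ Ω, x < y, and F(x,y) = Real.log ((1 − s)/(1 − t)). In particular, the map p + s • (b − p) ↦ −Real.log (1 − s) carries the timelike Funk distance on the segment [p, b) to the usual difference metric on [0, ∞). -/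
open RealInnerProductSpace
open scoped Classical

noncomputable section

/-!
Along the ray from `p` through `q`, the half-open segment `[p, b)` lies in `Ω` while `b` lies in
`closure I`, and the ray re-enters `I` at or beyond `b`. Hence for two points `x, y` of `[p, b)`,
the ray from `x` through `y` is the same ray and first meets `closure I` exactly at `b`, so
`b(x, y) = b`. The Funk distance is then a ratio of distances to `b` along one line, which
for `x = p + s • (b - p)` and `y = p + t • (b - p)` is `(1 - s) / (1 - t)`.
-/

open Set

section FirstHit

variable {E : Type*} [AddCommGroup E] [Module ℝ E] [TopologicalSpace E] [ContinuousAdd E]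
  [ContinuousSMul ℝ E]

theorem ray_first_hit {C : Set E} (hC : IsClosed C) {a : E} (ha : a ∉ C) (v : E)
    (hne : {t : ℝ | 0 < t ∧ a + t • v ∈ C}.Nonempty) :
    0 < sInf {t : ℝ | 0 < t ∧ a + t • v ∈ C} ∧
    a + sInf {t : ℝ | 0 < t ∧ a + t • v ∈ C} • v ∈ C ∧
    ∀ r ∈ Ioo 0 (sInf {t : ℝ | 0 < t ∧ a + t • v ∈ C}), a + r • v ∉ C := by
  set S := {t : ℝ | 0 < t ∧ a + t • v ∈ C}
  have hbdd : BddBelow S := ⟨0, fun t ht => ht.1.le⟩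
  have hcont : Continuous fun t : ℝ => a + t • v := by fun_prop
  have h0 : (fun t : ℝ => a + t • v) ⁻¹' Cᶜ ∈ nhds (0 : ℝ) :=
    (hC.isOpen_compl.preimage hcont).mem_nhds (by simpa using ha)
  obtain ⟨ε, hε, hball⟩ := Metric.mem_nhds_iff.mp h0
  have hε_le : ∀ t ∈ S, ε ≤ t := fun t ht => by
    by_contra! hlt
    exact hball (by simpa [abs_of_pos ht.1] using hlt) ht.2
  refine ⟨hε.trans_le (le_csInf hne hε_le), ?_, fun r hr hrC => ?_⟩
  · exact closure_minimal (fun t ht => ht.2) (hC.preimage hcont) (csInf_mem_closure hne hbdd)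
  · exact hr.2.not_ge (csInf_le hbdd ⟨hr.1, hrC⟩)

end FirstHit

variable {n : ℕ} {I : Set (Euc n)}

theorem funkT0_eq_of_first_hit {x y : Euc n} {r : ℝ} (hr : 0 < r)
    (hmem : y + r • (y - x) ∈ closure I)
    (hbefore : ∀ r' ∈ Ioo 0 r, y + r' • (y - x) ∉ closure I) :
    funkT0 I x y = r := by
  refine IsLeast.csInf_eq ⟨⟨hr, hmem⟩, fun r' hr' => ?_⟩
  by_contra! hlt
  exact hbefore r' ⟨hr'.1, hlt⟩ hr'.2

section Ray

variable {p b : Euc n}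

theorem ray_extend (s t r : ℝ) :
    p + t • (b - p) + r • (p + t • (b - p) - (p + s • (b - p))) =
      p + (t + r * (t - s)) • (b - p) := by
  module

theorem dist_ray_right (s : ℝ) (hs : s ≤ 1) :
    dist (p + s • (b - p)) b = (1 - s) * ‖b - p‖ := by
  rw [show p + s • (b - p) = AffineMap.lineMap p b s by
      rw [AffineMap.lineMap_apply_module', add_comm],
    dist_lineMap_right, Real.norm_eq_abs, abs_of_nonneg (by linarith), dist_eq_norm']

theorem ray_ne (hbp : b - p ≠ 0) {s t : ℝ} (hst : s ≠ t) :
    p + s • (b - p) ≠ p + t • (b - p) :=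
  fun h => hst (smul_left_injective ℝ hbp (add_left_cancel h))

theorem sub_ne_zero_of_ray (hΩ : ∀ u ∈ Ico (0 : ℝ) 1, p + u • (b - p) ∈ Omega I) {l : ℝ}
    (hl : p + l • (b - p) ∈ closure I) : b - p ≠ 0 := by
  intro h
  exact hΩ 0 ⟨le_rfl, one_pos⟩ (by simpa [h] using hl)

theorem funkLt_of_ray (hΩ : ∀ u ∈ Ico (0 : ℝ) 1, p + u • (b - p) ∈ Omega I) {l : ℝ}
    (hl : 1 ≤ l) (hlI : p + l • (b - p) ∈ I) {s t : ℝ} (hs : 0 ≤ s) (hst : s < t) (ht : t < 1) :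
    funkLt I (p + s • (b - p)) (p + t • (b - p)) := by
  refine ⟨ray_ne (sub_ne_zero_of_ray hΩ (subset_closure hlI)) hst.ne, ?_, ?_⟩
  · rw [segment_eq_image']
    rintro _ ⟨θ, ⟨hθ0, hθ1⟩, rfl⟩
    dsimp only
    rw [show p + s • (b - p) + θ • (p + t • (b - p) - (p + s • (b - p))) =
        p + (s + θ * (t - s)) • (b - p) by module]
    exact hΩ _ ⟨by nlinarith, by nlinarith⟩
  · refine ⟨(l - t) / (t - s), div_pos (by linarith) (by linarith), ?_⟩
    rwa [ray_extend, div_mul_cancel₀ _ (by linarith), add_sub_cancel]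

theorem funkB_of_ray (hΩ : ∀ u ∈ Ico (0 : ℝ) 1, p + u • (b - p) ∈ Omega I)
    (hb : b ∈ closure I) {s t : ℝ} (hs : 0 ≤ s) (hst : s < t) (ht : t < 1) :
    funkB I (p + s • (b - p)) (p + t • (b - p)) = b := by
  have hts : t - s ≠ 0 := by linarith
  have hhit :
      p + t • (b - p) + ((1 - t) / (t - s)) • (p + t • (b - p) - (p + s • (b - p))) = b := by
    rw [ray_extend, div_mul_cancel₀ _ hts, add_sub_cancel, one_smul, add_sub_cancel]
  have hT0 : funkT0 I (p + s • (b - p)) (p + t • (b - p)) = (1 - t) / (t - s) := by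
    refine funkT0_eq_of_first_hit (div_pos (by linarith) (by linarith)) (by rwa [hhit]) ?_
    rintro r ⟨hr0, hr⟩
    rw [ray_extend]
    exact hΩ _ ⟨by nlinarith, by linarith [(lt_div_iff₀ (by linarith : 0 < t - s)).mp hr]⟩
  rw [funkB, hT0, hhit]

theorem funkF_of_ray (hΩ : ∀ u ∈ Ico (0 : ℝ) 1, p + u • (b - p) ∈ Omega I)
    (hb : b ∈ closure I) {s t : ℝ} (hs : 0 ≤ s) (hst : s < t) (ht : t < 1) :
    funkF I (p + s • (b - p)) (p + t • (b - p)) = Real.log ((1 - s) / (1 - t)) := by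
  have hbp : b - p ≠ 0 := sub_ne_zero_of_ray hΩ (l := 1) (by simpa using hb)
  rw [funkF, if_neg (ray_ne hbp hst.ne), funkB_of_ray hΩ hb hs hst ht,
    dist_ray_right s (by linarith), dist_ray_right t ht.le,
    mul_div_mul_right _ _ (norm_ne_zero_iff.mpr hbp)]

end Ray

namespace funkLt

variable {p q : Euc n}

theorem funkT0_spec (h : funkLt I p q) :
    0 < funkT0 I p q ∧ funkB I p q ∈ closure I ∧
      ∀ r ∈ Ioo 0 (funkT0 I p q), q + r • (q - p) ∉ closure I := by
  obtain ⟨-, hseg, t', ht', hI⟩ := h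
  exact ray_first_hit isClosed_closure (hseg (right_mem_segment ℝ p q)) (q - p)
    ⟨t', ht', subset_closure hI⟩

theorem funkB_mem_closure (h : funkLt I p q) : funkB I p q ∈ closure I :=
  h.funkT0_spec.2.1

theorem funkB_sub_eq (p q : Euc n) : funkB I p q - p = (1 + funkT0 I p q) • (q - p) := by
  unfold funkB
  module

theorem ray_mem_omega (h : funkLt I p q) :
    ∀ u ∈ Ico (0 : ℝ) 1, p + u • (funkB I p q - p) ∈ Omega I := by
  obtain ⟨ht0, -, hbefore⟩ := h.funkT0_spec
  rintro u ⟨hu0, hu1⟩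
  rw [funkB_sub_eq, smul_smul]
  by_cases hc : u * (1 + funkT0 I p q) ≤ 1
  · exact h.2.1 (segment_eq_image' ℝ p q ▸ ⟨_, ⟨by positivity, hc⟩, rfl⟩)
  · rw [show p + (u * (1 + funkT0 I p q)) • (q - p) =
        q + (u * (1 + funkT0 I p q) - 1) • (q - p) by module]
    exact hbefore _ ⟨by linarith, by nlinarith⟩

theorem exists_one_le_ray_mem (h : funkLt I p q) :
    ∃ l : ℝ, 1 ≤ l ∧ p + l • (funkB I p q - p) ∈ I := by
  have ht0 := h.funkT0_spec.1
  obtain ⟨t', ht', hI⟩ := h.2.2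
  set l := (1 + t') / (1 + funkT0 I p q)
  have hlI : p + l • (funkB I p q - p) ∈ I := by
    rwa [funkB_sub_eq, smul_smul, div_mul_cancel₀ _ (by linarith),
      show p + (1 + t') • (q - p) = q + t' • (q - p) by module]
  refine ⟨l, ?_, hlI⟩
  by_contra! hl
  exact h.ray_mem_omega l ⟨by positivity, hl⟩ (subset_closure hlI)

end funkLt

theorem funkF_on_ray_general {n : ℕ} (I : Set (Euc n)) (p q : Euc n) (hpq : funkLt I p q)
    (s t : ℝ) (hs : 0 ≤ s) (hst : s < t) (ht : t < 1) :
    p + s • (funkB I p q - p) ∈ Omega I ∧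
    p + t • (funkB I p q - p) ∈ Omega I ∧
    funkLt I (p + s • (funkB I p q - p)) (p + t • (funkB I p q - p)) ∧
    funkF I (p + s • (funkB I p q - p)) (p + t • (funkB I p q - p)) =
      Real.log ((1 - s) / (1 - t)) ∧
    funkF I (p + s • (funkB I p q - p)) (p + t • (funkB I p q - p)) =
      (-Real.log (1 - t)) - (-Real.log (1 - s)) := by
  have hΩ := hpq.ray_mem_omega
  obtain ⟨l, hl, hlI⟩ := hpq.exists_one_le_ray_mem
  have hF := funkF_of_ray hΩ hpq.funkB_mem_closure hs hst ht
  refine ⟨hΩ s ⟨hs, hst.trans ht⟩, hΩ t ⟨hs.trans hst.le, ht⟩, funkLt_of_ray hΩ hl hlI hs hst ht,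
    hF, ?_⟩
  rw [hF, Real.log_div (by linarith) (by linarith)]
  ring

/-- a Euclidean ray toward the boundary is isometric to a Euclidean half-line:
for `p < q`, `b = b(p,q)` and `0 ≤ s < t < 1`, the points `x = p + s • (b − p)` and
`y = p + t • (b − p)` lie in `Ω`, satisfy `x < y`, and `F(x,y) = log ((1−s)/(1−t))`;
that is, `p + s • (b − p) ↦ −log (1−s)` carries the timelike Funk distance on `[p,b)`
to the difference metric on `[0,∞)`. -/
theorem funkF_on_ray {n : ℕ} (hn : 1 ≤ n) (I : Set (Euc n))
    (hne : I.Nonempty) (hop : IsOpen I) (hconv : Convex ℝ I)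
    (hcl : closure I ≠ Set.univ)
    (p q : Euc n) (hp : p ∈ Omega I) (hq : q ∈ Omega I)
    (hpq : funkLt I p q)
    (s t : ℝ) (hs : 0 ≤ s) (hst : s < t) (ht : t < 1) :
    p + s • (funkB I p q - p) ∈ Omega I ∧
    p + t • (funkB I p q - p) ∈ Omega I ∧
    funkLt I (p + s • (funkB I p q - p)) (p + t • (funkB I p q - p)) ∧
    funkF I (p + s • (funkB I p q - p)) (p + t • (funkB I p q - p)) =
      Real.log ((1 - s) / (1 - t)) ∧
    funkF I (p + s • (funkB I p q - p)) (p + t • (funkB I p q - p)) =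
      (-Real.log (1 - t)) - (-Real.log (1 - s)) :=
  funkF_on_ray_general I p q hpq s t hs hst ht
end
end

section
/- Uniqueness of geodesics characterizes strict convexity: the following are equivalent. (i) For every F-geodesic σ : [0,1] → Ω, the image of σ is contained in the Euclidean segment [σ(0), σ(1)]. (ii) closure I is strictly convex (equivalently, K = frontier I contains no nondegenerate Euclidean segment). -/
open RealInnerProductSpace
open scoped Classical

noncomputable section

/-- An `F`-geodesic on a real interval `J`: it takes values in `Ω`, is (weakly)
increasing for the timelike Funk order, and the time inequality along it is an equality. -/
def IsFGeodesic {n : ℕ} (I : Set (Euc n)) (J : Set ℝ) (σ : ℝ → Euc n) : Prop :=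
  (∀ t ∈ J, σ t ∈ Omega I) ∧
  (∀ t₁ ∈ J, ∀ t₂ ∈ J, t₁ ≤ t₂ → σ t₁ = σ t₂ ∨ funkLt I (σ t₁) (σ t₂)) ∧
  (∀ t₁ ∈ J, ∀ t₂ ∈ J, ∀ t₃ ∈ J, t₁ ≤ t₂ → t₂ ≤ t₃ →
    funkF I (σ t₁) (σ t₂) + funkF I (σ t₂) (σ t₃) = funkF I (σ t₁) (σ t₃))

/-!
If `closure I` is strictly convex, take `p < q < r` along a geodesic and a supporting hyperplane
`f = c` of `I` at `b(p, r)`. Since `exp F(p, q) = |p - b(p, q)| / |q - b(p, q)|` and `c - f` is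
affine along rays and nonnegative on `closure I`, we get `exp F(p, q) * (c - f q) ≥ c - f p`, with
equality exactly when `b(p, q)` lies on the hyperplane. Additivity of `F` along `p, q, r` forces
equality for both `b(p, q)` and `b(q, r)`. A strictly convex set meets a supporting hyperplane in
at most one point, so `p, q, r` lie in this order on a ray ending at `b(p, r)`.

If `closure I` is not strictly convex, it has a flat face `[a, b]` in a supporting hyperplane.
In the plane through `a`, `b` and a point of `I` there is a parabola whose chords all leave `Ω`
through `[a, b]`. Along it `F` is the logarithm of the ratio of heights above the hyperplane, hence
additive, so the parabola is an `F`-geodesic that is not a segment.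
-/

open Set Topology

lemma map_le_of_mem_closure {X : Type*} [TopologicalSpace X] {s : Set X} {f : X → ℝ}
    (hf : Continuous f) {c : ℝ} (hs : ∀ x ∈ s, f x < c) {x : X} (hx : x ∈ closure s) :
    f x ≤ c :=
  closure_minimal (fun y hy => (hs y hy).le) (isClosed_le hf continuous_const) hx

section General

variable {E : Type*} [NormedAddCommGroup E] [NormedSpace ℝ E]

lemma StrictConvex.eq_of_map_eq_of_map_le {s : Set E} (hs : StrictConvex ℝ s)
    {f : E →L[ℝ] ℝ} (hf : f ≠ 0) {c : ℝ} (hle : ∀ x ∈ s, f x ≤ c) {x y : E}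
    (hx : x ∈ s) (hy : y ∈ s) (hfx : f x = c) (hfy : f y = c) : x = y := by
  by_contra hxy
  have hmid := hs hx hy hxy (by norm_num : (0 : ℝ) < 1 / 2) (by norm_num : (0 : ℝ) < 1 / 2)
    (by norm_num)
  have hmax : IsLocalMax f ((1 / 2 : ℝ) • x + (1 / 2 : ℝ) • y) := by
    filter_upwards [mem_interior_iff_mem_nhds.mp hmid] with z hz
    simp only [map_add, map_smul, smul_eq_mul, hfx, hfy]
    linarith [hle z hz]
  exact hf (hmax.hasFDerivAt_eq_zero f.hasFDerivAt)

lemma exists_flat_face_of_not_strictConvex {s : Set E} (hop : IsOpen s) (hconv : Convex ℝ s)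
    (hsc : ¬ StrictConvex ℝ (closure s)) :
    ∃ (f : E →L[ℝ] ℝ) (c : ℝ) (a b : E), (∀ x ∈ s, f x < c) ∧ a ∈ closure s ∧
      b ∈ closure s ∧ a ≠ b ∧ f a = c ∧ f b = c := by
  simp only [StrictConvex, Set.Pairwise, not_forall] at hsc
  obtain ⟨a, ha, b, hb, hab, α, β, hα, hβ, hαβ, hz⟩ := hsc
  have hzs : α • a + β • b ∉ s := fun hmem =>
    hz (interior_mono subset_closure (hop.interior_eq.symm ▸ hmem))
  obtain ⟨f, hf⟩ := geometric_hahn_banach_open_point hconv hop hzs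
  have hfa := map_le_of_mem_closure f.continuous hf ha
  have hfb := map_le_of_mem_closure f.continuous hf hb
  have hfz : f (α • a + β • b) = α * f a + β * f b := by
    simp only [map_add, map_smul, smul_eq_mul]
  rw [hfz] at hf hfa hfb
  obtain rfl : α = 1 - β := eq_sub_of_add_eq hαβ
  have hfab : f a = f b :=
    le_antisymm (le_of_mul_le_mul_left (by linarith) hβ) (le_of_mul_le_mul_left (by linarith) hα)
  exact ⟨f, _, a, b, hf, ha, hb, hab, by rw [hfab]; ring, by rw [hfab]; ring⟩

end General

section Funk

variable {n : ℕ} {I : Set (Euc n)} {p q : Euc n}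

lemma funkF_self (p : Euc n) : funkF I p p = 0 := if_pos rfl

lemma funkT0_isLeast (h : funkLt I p q) :
    IsLeast {t : ℝ | 0 < t ∧ q + t • (q - p) ∈ closure I} (funkT0 I p q) := by
  obtain ⟨-, hseg, t, ht, htI⟩ := h
  have hq : q ∉ closure I := hseg (right_mem_segment ℝ p q)
  set g : ℝ → Euc n := fun t => q + t • (q - p)
  have hS : {t : ℝ | 0 < t ∧ q + t • (q - p) ∈ closure I} = Ici 0 ∩ g ⁻¹' closure I := by
    ext s
    refine ⟨fun hs => ⟨hs.1.le, hs.2⟩, fun hs => ⟨hs.1.lt_of_ne ?_, hs.2⟩⟩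
    rintro rfl
    exact hq (by simpa [g] using hs.2)
  rw [funkT0, hS]
  exact (isClosed_Ici.inter (isClosed_closure.preimage (by fun_prop))).isLeast_csInf
    ⟨t, ht.le, subset_closure htI⟩ ⟨0, fun s hs => hs.1⟩

lemma funkT0_pos (h : funkLt I p q) : 0 < funkT0 I p q := (funkT0_isLeast h).1.1

lemma funkB_mem_closure (h : funkLt I p q) : funkB I p q ∈ closure I := (funkT0_isLeast h).1.2

lemma funkB_notMem (hop : IsOpen I) (h : funkLt I p q) : funkB I p q ∉ I := by
  intro hmem
  have hg : Continuous fun t : ℝ => q + t • (q - p) := by fun_prop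
  have hnear : ∀ᶠ s in 𝓝[<] funkT0 I p q, (q + s • (q - p) ∈ I ∧ 0 < s) ∧ s < funkT0 I p q :=
    (eventually_nhdsWithin_of_eventually_nhds (((hop.preimage hg).eventually_mem hmem).and
      (lt_mem_nhds (funkT0_pos h)))).and self_mem_nhdsWithin
  obtain ⟨s, ⟨hsI, hs⟩, hst⟩ := hnear.exists
  exact hst.not_ge ((funkT0_isLeast h).2 ⟨hs, subset_closure hsI⟩)

lemma funkF_eq_log (h : funkLt I p q) :
    funkF I p q = Real.log ((1 + funkT0 I p q) / funkT0 I p q) := by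
  have ht := funkT0_pos h
  have hpq : 0 < ‖q - p‖ := norm_sub_pos_iff.mpr h.1.symm
  have hp : p - funkB I p q = (-(1 + funkT0 I p q)) • (q - p) := by rw [funkB]; module
  have hq : q - funkB I p q = (-funkT0 I p q) • (q - p) := by rw [funkB]; module
  rw [funkF, if_neg h.1, dist_eq_norm, dist_eq_norm, hp, hq, norm_smul, norm_smul,
    Real.norm_eq_abs, Real.norm_eq_abs, abs_neg, abs_neg, abs_of_pos ht,
    abs_of_pos (by linarith), mul_div_mul_right _ _ hpq.ne']

lemma funkF_pos (h : funkLt I p q) : 0 < funkF I p q := by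
  have ht := funkT0_pos h
  rw [funkF_eq_log h]
  exact Real.log_pos ((one_lt_div ht).mpr (by linarith))

lemma exp_funkF (h : funkLt I p q) :
    Real.exp (funkF I p q) = (1 + funkT0 I p q) / funkT0 I p q := by
  have ht := funkT0_pos h
  rw [funkF_eq_log h, Real.exp_log (by positivity)]

lemma wbtw_funkB (h : funkLt I p q) : Wbtw ℝ p q (funkB I p q) := by
  have ht := funkT0_pos h
  refine ⟨(1 + funkT0 I p q)⁻¹, ⟨by positivity, inv_le_one_of_one_le₀ (by linarith)⟩, ?_⟩
  rw [AffineMap.lineMap_apply_module, funkB]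
  match_scalars <;> field_simp
  ring

end Funk

section Backward

variable {n : ℕ} {I : Set (Euc n)} {p q r : Euc n}

lemma sub_map_funkB (h : funkLt I p q) (f : Euc n →L[ℝ] ℝ) (c : ℝ) :
    c - f (funkB I p q) =
      funkT0 I p q * (Real.exp (funkF I p q) * (c - f q) - (c - f p)) := by
  have ht := funkT0_pos h
  rw [exp_funkF h, funkB]
  simp only [map_add, map_smul, map_sub, smul_eq_mul]
  field_simp
  ring

lemma funkB_eq_of_funkF_add_eq (hop : IsOpen I) (hconv : Convex ℝ I)
    (hsc : StrictConvex ℝ (closure I)) (hpq : funkLt I p q) (hqr : funkLt I q r)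
    (hpr : funkLt I p r) (hadd : funkF I p q + funkF I q r = funkF I p r) :
    funkB I p q = funkB I p r ∧ funkB I q r = funkB I p r := by
  obtain ⟨f, hf⟩ := geometric_hahn_banach_open_point hconv hop (funkB_notMem hop hpr)
  have hf0 : f ≠ 0 := by
    obtain ⟨-, -, t, -, ht⟩ := hpr
    rintro rfl
    simpa using hf _ ht
  have hexp : Real.exp (funkF I p q) * Real.exp (funkF I q r) = Real.exp (funkF I p r) := by
    rw [← Real.exp_add, hadd]
  set c := f (funkB I p r)
  have hle : ∀ x ∈ closure I, f x ≤ c := fun x hx => map_le_of_mem_closure f.continuous hf hx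
  have e₁ := sub_map_funkB hpq f c
  have e₂ := sub_map_funkB hqr f c
  have e₃ := sub_map_funkB hpr f c
  set E₁ := Real.exp (funkF I p q)
  set E₂ := Real.exp (funkF I q r)
  -- Writing `φ = c - f ≥ 0` on `closure I`: `E₁ φ q ≥ φ p`, `E₂ φ r ≥ φ q` and `E₁ E₂ φ r = φ p`.
  have hA : 0 ≤ E₁ * (c - f q) - (c - f p) :=
    nonneg_of_mul_nonneg_right (e₁ ▸ sub_nonneg.2 (hle _ (funkB_mem_closure hpq)))
      (funkT0_pos hpq)
  have hB : 0 ≤ E₂ * (c - f r) - (c - f q) :=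
    nonneg_of_mul_nonneg_right (e₂ ▸ sub_nonneg.2 (hle _ (funkB_mem_closure hqr)))
      (funkT0_pos hqr)
  have hC : E₁ * E₂ * (c - f r) - (c - f p) = 0 := by
    rw [sub_self, eq_comm, mul_eq_zero, ← hexp] at e₃
    exact e₃.resolve_left (funkT0_pos hpr).ne'
  have hE₁ : 0 < E₁ := Real.exp_pos _
  obtain ⟨hB0, hA0⟩ := (add_eq_zero_iff_of_nonneg (mul_nonneg hE₁.le hB) hA).1
    (by linear_combination hC)
  have hB0 := (mul_eq_zero.1 hB0).resolve_left hE₁.ne'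
  exact ⟨hsc.eq_of_map_eq_of_map_le hf0 hle (funkB_mem_closure hpq) (funkB_mem_closure hpr)
      (by linear_combination -e₁ - funkT0 I p q * hA0) rfl,
    hsc.eq_of_map_eq_of_map_le hf0 hle (funkB_mem_closure hqr) (funkB_mem_closure hpr)
      (by linear_combination -e₂ - funkT0 I q r * hB0) rfl⟩

lemma mem_segment_of_funkB_eq (hpq : funkLt I p q) (hqr : funkLt I q r)
    (hb : funkB I p q = funkB I q r) : q ∈ segment ℝ p r :=
  mem_segment_iff_wbtw.2 <| (wbtw_funkB hpq).trans_right_left (hb ▸ wbtw_funkB hqr)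

theorem IsFGeodesic.mem_segment_of_strictConvex (hop : IsOpen I) (hconv : Convex ℝ I)
    (hsc : StrictConvex ℝ (closure I)) {σ : ℝ → Euc n} (hσ : IsFGeodesic I (Icc 0 1) σ)
    {t : ℝ} (ht : t ∈ Icc (0 : ℝ) 1) : σ t ∈ segment ℝ (σ 0) (σ 1) := by
  obtain ⟨-, hmono, hadd⟩ := hσ
  have h0 : (0 : ℝ) ∈ Icc (0 : ℝ) 1 := left_mem_Icc.2 zero_le_one
  have h1 : (1 : ℝ) ∈ Icc (0 : ℝ) 1 := right_mem_Icc.2 zero_le_one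
  rcases hmono 0 h0 t ht ht.1 with h0t | h0t
  · exact h0t ▸ left_mem_segment ℝ _ _
  rcases hmono t ht 1 h1 ht.2 with ht1 | ht1
  · exact ht1 ▸ right_mem_segment ℝ _ _
  have hF := hadd 0 h0 t ht 1 h1 ht.1 ht.2
  rcases hmono 0 h0 1 h1 zero_le_one with h01 | h01
  · have hF01 : funkF I (σ 0) (σ 1) = 0 := by rw [h01, funkF_self]
    linarith [funkF_pos h0t, funkF_pos ht1]
  obtain ⟨hb₁, hb₂⟩ := funkB_eq_of_funkF_add_eq hop hconv hsc h0t ht1 h01 hF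
  exact mem_segment_of_funkB_eq h0t ht1 (hb₁.trans hb₂.symm)

end Backward

section FacePlane

variable {E : Type*} [NormedAddCommGroup E] [NormedSpace ℝ E] {a b w : E}
  {f : E →L[ℝ] ℝ} {c : ℝ}

/-- Affine coordinates on the plane through `a`, `b`, `w`: the origin is the midpoint of `[a, b]`,
the `x`-axis runs along `b - a`, and `w` is at `(0, -1)`. -/
def facePlane (a b w : E) (x y : ℝ) : E :=
  midpoint ℝ a b + x • (b - a) + y • (midpoint ℝ a b - w)

lemma facePlane_add_smul_sub (x₁ y₁ x₂ y₂ t : ℝ) :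
    facePlane a b w x₂ y₂ + t • (facePlane a b w x₂ y₂ - facePlane a b w x₁ y₁) =
      facePlane a b w (x₂ + t * (x₂ - x₁)) (y₂ + t * (y₂ - y₁)) := by
  simp only [facePlane]
  module

lemma map_facePlane (hfa : f a = c) (hfb : f b = c) (x y : ℝ) :
    f (facePlane a b w x y) = c + y * (c - f w) := by
  simp only [facePlane, midpoint_eq_smul_add, map_add, map_sub, map_smul, smul_eq_mul, hfa, hfb,
    invOf_eq_inv]
  ring

lemma facePlane_injective (hab : a ≠ b) (hfa : f a = c) (hfb : f b = c) (hw : f w ≠ c)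
    {x₁ y₁ x₂ y₂ : ℝ} (h : facePlane a b w x₁ y₁ = facePlane a b w x₂ y₂) :
    x₁ = x₂ ∧ y₁ = y₂ := by
  have hy : y₁ = y₂ := by
    have := congrArg f h
    rw [map_facePlane hfa hfb, map_facePlane hfa hfb] at this
    exact mul_right_cancel₀ (sub_ne_zero.2 hw.symm) (add_left_cancel this)
  subst hy
  have hx : (x₁ - x₂) • (b - a) = 0 := by
    rw [sub_smul, sub_eq_zero]
    simpa only [facePlane, add_left_inj, add_right_inj] using h
  exact ⟨sub_eq_zero.1 ((smul_eq_zero.1 hx).resolve_right (sub_ne_zero.2 hab.symm)), rfl⟩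

lemma facePlane_mem_closure {s : Set E} (hconv : Convex ℝ s) (ha : a ∈ closure s)
    (hb : b ∈ closure s) {x : ℝ} (hx : |x| ≤ 1 / 2) : facePlane a b w x 0 ∈ closure s := by
  obtain ⟨hx₁, hx₂⟩ := abs_le.1 hx
  have heq : facePlane a b w x 0 = (1 / 2 - x) • a + (1 / 2 + x) • b := by
    simp only [facePlane, midpoint_eq_smul_add, invOf_eq_inv]
    module
  rw [heq]
  exact hconv.closure ha hb (by linarith) (by linarith) (by ring)

lemma facePlane_mem {s : Set E} (hop : IsOpen s) (hconv : Convex ℝ s) (ha : a ∈ closure s)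
    (hb : b ∈ closure s) (hw : w ∈ s) {x : ℝ} (hx : |x| ≤ 1 / 4) :
    facePlane a b w x (-1 / 2) ∈ s := by
  have heq : facePlane a b w x (-1 / 2) =
      (1 / 2 : ℝ) • w + (1 / 2 : ℝ) • facePlane a b w (2 * x) 0 := by
    simp only [facePlane]
    module
  have hmem := hconv.combo_interior_closure_mem_interior (hop.interior_eq.symm ▸ hw)
    (facePlane_mem_closure hconv ha hb (w := w) (x := 2 * x) (by rw [abs_mul, abs_two]; linarith))
    (by norm_num : (0 : ℝ) < 1 / 2) (by norm_num : (0 : ℝ) ≤ 1 / 2) (by norm_num)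
  rwa [heq, ← hop.interior_eq]

end FacePlane

section Forward

variable {n : ℕ} {I : Set (Euc n)} {p q a b w : Euc n} {f : Euc n →L[ℝ] ℝ} {c : ℝ}

lemma funkLt_of_map_lt (hle : ∀ x ∈ closure I, f x ≤ c) (hq : c < f q) (hpq : f q < f p)
    (hI : ∃ t > (0 : ℝ), q + t • (q - p) ∈ I) : funkLt I p q := by
  refine ⟨fun h => hpq.ne (by rw [h]), fun x hx hxI => ?_, hI⟩
  have hxc : c < f x :=
    (convex_halfSpace_gt f.isLinear c).segment_subset (hq.trans hpq) hq hx
  exact hxc.not_ge (hle x hxI)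

lemma funkT0_eq_of_map_lt (hle : ∀ x ∈ closure I, f x ≤ c) (hq : c < f q) (hpq : f q < f p)
    (hx : q + ((f q - c) / (f p - f q)) • (q - p) ∈ closure I) :
    funkT0 I p q = (f q - c) / (f p - f q) := by
  refine IsLeast.csInf_eq ⟨⟨div_pos (by linarith) (by linarith), hx⟩, ?_⟩
  rintro t ⟨-, ht⟩
  have hft := hle _ ht
  simp only [map_add, map_smul, map_sub, smul_eq_mul] at hft
  rw [div_le_iff₀ (by linarith)]
  linarith

lemma funkF_eq_log_of_map_lt (h : funkLt I p q) (hle : ∀ x ∈ closure I, f x ≤ c)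
    (hq : c < f q) (hpq : f q < f p)
    (hx : q + ((f q - c) / (f p - f q)) • (q - p) ∈ closure I) :
    funkF I p q = Real.log ((f p - c) / (f q - c)) := by
  rw [funkF_eq_log h, funkT0_eq_of_map_lt hle hq hpq hx]
  have : f p - f q ≠ 0 := by linarith
  have : f q - c ≠ 0 := by linarith
  congr 1
  field_simp
  ring

/-- Every chord of this parabola between heights `0 < y₂ < y₁ ≤ 1` leaves `Ω` at the point
`(-y₁ y₂ / 8, 0)` of the face `[a, b]` and enters `I` at height `-1/2`; the factor `1/8` keeps
both points in range. -/
def faceParabola (a b w : Euc n) (y : ℝ) : Euc n := facePlane a b w (y ^ 2 / 8) y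

lemma funkLt_and_funkF_faceParabola (hop : IsOpen I) (hconv : Convex ℝ I)
    (hfI : ∀ x ∈ I, f x < c) (ha : a ∈ closure I) (hb : b ∈ closure I) (hfa : f a = c)
    (hfb : f b = c) (hw : w ∈ I)
    {y₁ y₂ : ℝ} (h₂ : 0 < y₂) (h₁₂ : y₂ < y₁) (h₁ : y₁ ≤ 1) :
    funkLt I (faceParabola a b w y₁) (faceParabola a b w y₂) ∧
      funkF I (faceParabola a b w y₁) (faceParabola a b w y₂) = Real.log (y₁ / y₂) := by
  have hle : ∀ x ∈ closure I, f x ≤ c := fun x hx => map_le_of_mem_closure f.continuous hfI hx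
  have hh : 0 < c - f w := sub_pos.2 (hfI w hw)
  have hf₁ := map_facePlane (w := w) hfa hfb (y₁ ^ 2 / 8) y₁
  have hf₂ := map_facePlane (w := w) hfa hfb (y₂ ^ 2 / 8) y₂
  unfold faceParabola
  have hδ : y₁ - y₂ ≠ 0 := by linarith
  have hq : c < f (facePlane a b w (y₂ ^ 2 / 8) y₂) := by rw [hf₂]; nlinarith
  have hpq : f (facePlane a b w (y₂ ^ 2 / 8) y₂) < f (facePlane a b w (y₁ ^ 2 / 8) y₁) := by
    rw [hf₁, hf₂]; nlinarith
  have hentry : facePlane a b w (y₂ ^ 2 / 8 + (y₂ + 1 / 2) / (y₁ - y₂) * (y₂ ^ 2 / 8 - y₁ ^ 2 / 8))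
      (y₂ + (y₂ + 1 / 2) / (y₁ - y₂) * (y₂ - y₁)) ∈ I := by
    convert facePlane_mem hop hconv ha hb hw (x := -(y₁ * y₂ + (y₁ + y₂) / 2) / 8)
      (abs_le.2 ⟨by nlinarith, by nlinarith⟩) using 2 <;> field_simp <;> ring
  have hexit : facePlane a b w (y₂ ^ 2 / 8 + y₂ / (y₁ - y₂) * (y₂ ^ 2 / 8 - y₁ ^ 2 / 8))
      (y₂ + y₂ / (y₁ - y₂) * (y₂ - y₁)) ∈ closure I := by
    convert facePlane_mem_closure hconv ha hb (w := w) (x := -(y₁ * y₂) / 8)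
      (abs_le.2 ⟨by nlinarith, by nlinarith⟩) using 2 <;> field_simp <;> ring
  have hlt := funkLt_of_map_lt hle hq hpq
    ⟨(y₂ + 1 / 2) / (y₁ - y₂), div_pos (by linarith) (by linarith),
      by rw [facePlane_add_smul_sub]; exact hentry⟩
  have hts : (f (facePlane a b w (y₂ ^ 2 / 8) y₂) - c) /
      (f (facePlane a b w (y₁ ^ 2 / 8) y₁) - f (facePlane a b w (y₂ ^ 2 / 8) y₂)) =
      y₂ / (y₁ - y₂) := by
    rw [hf₁, hf₂, add_sub_cancel_left, add_sub_add_left_eq_sub, ← sub_mul,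
      mul_div_mul_right _ _ hh.ne']
  refine ⟨hlt, ?_⟩
  rw [funkF_eq_log_of_map_lt hlt hle hq hpq (by rw [hts, facePlane_add_smul_sub]; exact hexit),
    hf₁, hf₂]
  congr 1
  field_simp
  ring

lemma exists_fGeodesic_not_mem_segment (hop : IsOpen I) (hconv : Convex ℝ I)
    (hfI : ∀ x ∈ I, f x < c) (ha : a ∈ closure I) (hb : b ∈ closure I) (hab : a ≠ b)
    (hfa : f a = c) (hfb : f b = c) :
    ∃ σ : ℝ → Euc n, IsFGeodesic I (Icc 0 1) σ ∧ σ (1 / 2) ∉ segment ℝ (σ 0) (σ 1) := by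
  obtain ⟨w, hw⟩ := closure_nonempty_iff.mp ⟨a, ha⟩
  have hh : 0 < c - f w := sub_pos.2 (hfI w hw)
  set σ : ℝ → Euc n := fun t => faceParabola a b w (1 - t / 2)
  have hF : ∀ t₁ ∈ Icc (0 : ℝ) 1, ∀ t₂ ∈ Icc (0 : ℝ) 1, t₁ ≤ t₂ →
      (t₁ = t₂ ∨ funkLt I (σ t₁) (σ t₂)) ∧
        funkF I (σ t₁) (σ t₂) = Real.log (1 - t₁ / 2) - Real.log (1 - t₂ / 2) := by
    intro t₁ ht₁ t₂ ht₂ h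
    rcases h.eq_or_lt with rfl | h
    · exact ⟨Or.inl rfl, by rw [funkF_self, sub_self]⟩
    obtain ⟨hlt, hF⟩ := funkLt_and_funkF_faceParabola (y₁ := 1 - t₁ / 2) (y₂ := 1 - t₂ / 2)
      hop hconv hfI ha hb hfa hfb hw (by linarith [ht₂.2]) (by linarith) (by linarith [ht₁.1])
    exact ⟨Or.inr hlt, by rw [hF, Real.log_div (by linarith [ht₁.2]) (by linarith [ht₂.2])]⟩
  refine ⟨σ, ⟨fun t ht hσ => ?_, fun t₁ h₁ t₂ h₂ h => ?_, fun t₁ h₁ t₂ h₂ t₃ h₃ h₁₂ h₂₃ => ?_⟩, ?_⟩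
  · have hle := map_le_of_mem_closure f.continuous hfI hσ
    simp only [σ, faceParabola, map_facePlane hfa hfb] at hle
    nlinarith [ht.2]
  · exact (hF t₁ h₁ t₂ h₂ h).1.imp_left (congrArg σ)
  · rw [(hF t₁ h₁ t₂ h₂ h₁₂).2, (hF t₂ h₂ t₃ h₃ h₂₃).2, (hF t₁ h₁ t₃ h₃ (h₁₂.trans h₂₃)).2]
    ring
  · rw [segment_eq_image']
    rintro ⟨θ, -, hθ⟩
    dsimp only at hθ
    rw [← neg_sub, smul_neg, ← neg_smul] at hθ
    simp only [σ, faceParabola, facePlane_add_smul_sub] at hθ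
    obtain ⟨hx, hy⟩ := facePlane_injective hab hfa hfb (hfI w hw).ne hθ
    norm_num at hx hy
    linarith

end Forward

theorem fGeodesic_unique_iff_strictConvex_general {n : ℕ} (I : Set (Euc n))
    (hop : IsOpen I) (hconv : Convex ℝ I) :
    (∀ σ : ℝ → Euc n, IsFGeodesic I (Set.Icc 0 1) σ →
      ∀ t ∈ Set.Icc (0:ℝ) 1, σ t ∈ segment ℝ (σ 0) (σ 1)) ↔
    StrictConvex ℝ (closure I) := by
  refine ⟨fun hgeo => ?_, fun hsc σ hσ t ht => hσ.mem_segment_of_strictConvex hop hconv hsc ht⟩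
  by_contra hsc
  obtain ⟨f, c, a, b, hfI, ha, hb, hab, hfa, hfb⟩ :=
    exists_flat_face_of_not_strictConvex hop hconv hsc
  obtain ⟨σ, hσ, hσ_not⟩ := exists_fGeodesic_not_mem_segment hop hconv hfI ha hb hab hfa hfb
  exact hσ_not (hgeo σ hσ _ ⟨by norm_num, by norm_num⟩)

/-- every `F`-geodesic `σ : [0,1] → Ω` has image in the Euclidean segment
`[σ 0, σ 1]` if and only if `closure I` is strictly convex. -/
theorem fGeodesic_unique_iff_strictConvex {n : ℕ} (hn : 1 ≤ n) (I : Set (Euc n))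
    (hne : I.Nonempty) (hop : IsOpen I) (hconv : Convex ℝ I)
    (hcl : closure I ≠ Set.univ) :
    (∀ σ : ℝ → Euc n, IsFGeodesic I (Set.Icc 0 1) σ →
      ∀ t ∈ Set.Icc (0:ℝ) 1, σ t ∈ segment ℝ (σ 0) (σ 1)) ↔
    StrictConvex ℝ (closure I) :=
  fGeodesic_unique_iff_strictConvex_general I hop hconv
end
end

section
/- The timelike Funk metric is the intrinsic timelike Finsler distance of P (length-maximizing property): let p, q ∈ Ω with p < q, and let σ : [0,1] → Ω be a C¹ curve with σ(0) = p, σ(1) = q, and σ'(t) ∈ D(σ(t)) for every t ∈ [0,1] (a timelike curve). Then ∫₀¹ P(σ(t), σ'(t)) dt ≤ F(p,q). Consequently, F(p,q) equals the supremum of ∫₀¹ P(σ(t), σ'(t)) dt over all such timelike C¹ curves from p to q, the supremum being attained by the straight segment σ(t) = p + t • (q − p). -/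
/-!
Let `b = p + τ • (q - p)` be the point where the ray from `p` through `q` reaches `closure I`, and
let `f ≤ c` be a supporting half-space of `I` at `b`. At a point `x` of a timelike curve the ray
in direction `v = σ'` reaches `closure I` at time `τ(x, v)`, so `f x + τ(x, v) * f v ≤ c`; with
`g = f ∘ σ - c` this reads `P(σ, σ') * g ≤ -g'`. Since `g 1 > 0` and `g' < 0` wherever `g > 0`,
`g` stays positive, hence `P(σ, σ') ≤ -(log g)'` and the length is at most `log g 0 - log g 1`,
which for the half-space at `b` is `F(p, q)`. Along the segment the hitting time is exactly
`1 + t₀ - t`, so the segment attains the bound.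
-/

open RealInnerProductSpace
open scoped Classical

noncomputable section

open Set Real Filter Topology

-- `tauF I x v` and `funkT0 I p q` are definitionally `sInf (hitTimes (closure I) _ _)`.
def hitTimes {E : Type*} [AddCommGroup E] [Module ℝ E] (C : Set E) (x v : E) : Set ℝ :=
  {t | 0 < t ∧ x + t • v ∈ C}

section HitTimes

variable {E : Type*} [AddCommGroup E] [Module ℝ E] {C : Set E} {x v : E}

theorem bddBelow_hitTimes : BddBelow (hitTimes C x v) := ⟨0, fun _ ht => ht.1.le⟩

theorem hitTimes_add_smul {s : ℝ} (hs : 0 ≤ s) (hseg : ∀ u ∈ Icc 0 s, x + u • v ∉ C) :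
    hitTimes C (x + s • v) v = (· + s) ⁻¹' hitTimes C x v := by
  ext t
  have hpt : x + s • v + t • v = x + (t + s) • v := by module
  simp only [hitTimes, mem_ofPred_eq, mem_preimage, hpt]
  refine ⟨fun ⟨ht, hmem⟩ => ⟨by linarith, hmem⟩, fun ⟨hts, hmem⟩ => ⟨?_, hmem⟩⟩
  by_contra! ht
  exact hseg (t + s) ⟨hts.le, by linarith⟩ hmem

theorem csInf_hitTimes_add_smul {s : ℝ} (hs : 0 ≤ s) (hseg : ∀ u ∈ Icc 0 s, x + u • v ∉ C)
    (hne : (hitTimes C x v).Nonempty) :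
    sInf (hitTimes C (x + s • v) v) = sInf (hitTimes C x v) - s := by
  have h := (OrderIso.addRight (-s)).map_csInf' hne bddBelow_hitTimes
  simp only [OrderIso.addRight_apply] at h
  rw [hitTimes_add_smul hs hseg, sub_eq_add_neg, h, image_add_right, neg_neg]

variable [TopologicalSpace E] [IsTopologicalAddGroup E] [ContinuousSMul ℝ E]

theorem csInf_hitTimes_mem (hC : IsClosed C) (hx : x ∉ C) (hne : (hitTimes C x v).Nonempty) :
    sInf (hitTimes C x v) ∈ hitTimes C x v := by
  have hclosed : hitTimes C x v = Ici 0 ∩ (fun t : ℝ => x + t • v) ⁻¹' C := by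
    ext t
    refine ⟨fun ht => ⟨ht.1.le, ht.2⟩, fun ⟨ht, hmem⟩ => ⟨ht.lt_of_ne ?_, hmem⟩⟩
    rintro rfl
    exact hx (by simpa using hmem)
  rw [hclosed] at hne ⊢
  exact (isClosed_Ici.inter (hC.preimage (by fun_prop))).csInf_mem hne
    (hclosed ▸ bddBelow_hitTimes)

theorem add_csInf_hitTimes_smul_notMem {U : Set E} (hU : IsOpen U) (hUC : U ⊆ C)
    (hpos : 0 < sInf (hitTimes C x v)) : x + sInf (hitTimes C x v) • v ∉ U := by
  intro hmem
  have hray : ∀ᶠ t in 𝓝 (sInf (hitTimes C x v)), x + t • v ∈ U :=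
    (by fun_prop : Continuous fun t : ℝ => x + t • v).continuousAt.eventually_mem
      (hU.mem_nhds hmem)
  have hbelow : ∀ᶠ t in 𝓝[<] sInf (hitTimes C x v), (0 < t ∧ x + t • v ∈ U) ∧
      t < sInf (hitTimes C x v) :=
    (((eventually_gt_nhds hpos).and hray).filter_mono nhdsWithin_le_nhds).and
      self_mem_nhdsWithin
  obtain ⟨t, ⟨ht, htU⟩, htlt⟩ := hbelow.exists
  exact (csInf_le bddBelow_hitTimes ⟨ht, hUC htU⟩).not_gt htlt

end HitTimes

theorem pos_of_hasDerivAt_neg_of_pos {g g' : ℝ → ℝ} {a b : ℝ}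
    (hg : ∀ t ∈ Icc a b, HasDerivAt g (g' t) t) (hb : 0 < g b)
    (hneg : ∀ t ∈ Icc a b, 0 < g t → g' t < 0) : ∀ t ∈ Icc a b, 0 < g t := by
  by_contra! hcon
  have hcont : ContinuousOn g (Icc a b) := fun t ht => (hg t ht).continuousAt.continuousWithinAt
  set T := Icc a b ∩ g ⁻¹' Iic 0
  have hTne : T.Nonempty := hcon
  have hTbdd : BddAbove T := ⟨b, fun t ht => ht.1.2⟩
  obtain ⟨⟨has, hsb⟩, hgs : g (sSup T) ≤ 0⟩ : sSup T ∈ T :=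
    (hcont.preimage_isClosed_of_isClosed isClosed_Icc isClosed_Iic).csSup_mem hTne hTbdd
  -- `sSup T` is the last point where `g ≤ 0`; the mean value theorem on `[sSup T, b]`, where
  -- `g > 0`, gives `g b < g (sSup T) ≤ 0`.
  have hslt : sSup T < b := hsb.lt_of_ne (by rintro h; rw [h] at hgs; exact hgs.not_gt hb)
  obtain ⟨c, ⟨hsc, hcb⟩, hc⟩ := exists_hasDerivAt_eq_slope g g' hslt
    (hcont.mono (Icc_subset_Icc has le_rfl))
    (fun t ht => hg t ⟨has.trans ht.1.le, ht.2.le⟩)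
  have hcI : c ∈ Icc a b := ⟨has.trans hsc.le, hcb.le⟩
  have hgc : 0 < g c := by
    by_contra! h
    exact (le_csSup hTbdd ⟨hcI, h⟩).not_gt hsc
  have hslope := hneg c hcI hgc
  rw [hc, div_lt_iff₀ (sub_pos.2 hslt), zero_mul] at hslope
  linarith

theorem integral_le_log_sub_log {g g' P : ℝ → ℝ} {a b : ℝ} (hab : a ≤ b)
    (hg : ∀ t ∈ Icc a b, HasDerivAt g (g' t) t) (hg' : ContinuousOn g' (Icc a b))
    (hP : ∀ t ∈ Icc a b, 0 < P t ∧ P t * g t ≤ -g' t) (hb : 0 < g b) :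
    ∫ t in a..b, P t ≤ log (g a) - log (g b) := by
  have hpos : ∀ t ∈ Icc a b, 0 < g t :=
    pos_of_hasDerivAt_neg_of_pos hg hb fun t ht hgt => by nlinarith [hP t ht]
  have hgcont : ContinuousOn g (Icc a b) := fun t ht => (hg t ht).continuousAt.continuousWithinAt
  have hlog : ∀ t ∈ uIcc a b, HasDerivAt (fun t => -log (g t)) (-(g' t / g t)) t := by
    intro t ht
    rw [uIcc_of_le hab] at ht
    exact ((hg t ht).log (hpos t ht).ne').neg
  have hint : IntervalIntegrable (fun t => -(g' t / g t)) MeasureTheory.volume a b :=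
    ((hg'.div hgcont fun t ht => (hpos t ht).ne').neg).intervalIntegrable_of_Icc hab
  have hle : ∀ t ∈ Icc a b, P t ≤ -(g' t / g t) := fun t ht => by
    rw [← neg_div, le_div_iff₀ (hpos t ht)]
    exact (hP t ht).2
  calc ∫ t in a..b, P t ≤ ∫ t in a..b, -(g' t / g t) := by
        -- a non-integrable `P` has integral `0`, which is still below `∫ -(g' / g) ≥ 0`
        by_cases hPint : IntervalIntegrable P MeasureTheory.volume a b
        · exact intervalIntegral.integral_mono_on hab hPint hint hle
        · rw [intervalIntegral.integral_undef hPint]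
          exact intervalIntegral.integral_nonneg hab fun t ht => (hP t ht).1.le.trans (hle t ht)
    _ = log (g a) - log (g b) := by
        rw [intervalIntegral.integral_eq_sub_of_hasDerivAt hlog hint]
        ring

section Timelike

variable {n : ℕ} {I : Set (Euc n)}

theorem tauF_mem_hitTimes {x v : Euc n} (hx : x ∈ Omega I)
    (hv : v ∈ Dcone I x) : tauF I x v ∈ hitTimes (closure I) x v :=
  let ⟨t, ht, htI⟩ := hv
  csInf_hitTimes_mem isClosed_closure hx ⟨t, ht, subset_closure htI⟩

theorem Pmink_mul_sub_le {f : Euc n →L[ℝ] ℝ} {c : ℝ}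
    (hI : closure I ⊆ {y | f y ≤ c}) {x v : Euc n} (hx : x ∈ Omega I) (hv : v ∈ Dcone I x) :
    0 < Pmink I x v ∧ Pmink I x v * (f x - c) ≤ -f v := by
  obtain ⟨hτ, hmem⟩ := tauF_mem_hitTimes hx hv
  have hsupp : f x + tauF I x v * f v ≤ c := by simpa using hI hmem
  refine ⟨one_div_pos.2 hτ, ?_⟩
  rw [Pmink, one_div_mul_eq_div, div_le_iff₀ hτ]
  linarith

theorem integral_Pmink_le_log_sub_log {f : Euc n →L[ℝ] ℝ} {c : ℝ}
    (hI : closure I ⊆ {y | f y ≤ c}) {σ σ' : ℝ → Euc n}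
    (hσ : ∀ t ∈ Icc (0:ℝ) 1, HasDerivAt σ (σ' t) t) (hσ' : ContinuousOn σ' (Icc (0:ℝ) 1))
    (hΩ : ∀ t ∈ Icc (0:ℝ) 1, σ t ∈ Omega I) (hD : ∀ t ∈ Icc (0:ℝ) 1, σ' t ∈ Dcone I (σ t))
    (h1 : c < f (σ 1)) :
    ∫ t in (0:ℝ)..1, Pmink I (σ t) (σ' t) ≤ log (f (σ 0) - c) - log (f (σ 1) - c) :=
  integral_le_log_sub_log zero_le_one
    (fun t ht => (f.hasFDerivAt.comp_hasDerivAt t (hσ t ht)).sub_const c)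
    (f.continuous.comp_continuousOn hσ') (fun t ht => Pmink_mul_sub_le hI (hΩ t ht) (hD t ht))
    (sub_pos.2 h1)

end Timelike

namespace funkLt

variable {n : ℕ} {I : Set (Euc n)} {p q : Euc n}

theorem add_smul_mem_Omega (hpq : funkLt I p q) {t : ℝ} (ht : t ∈ Icc (0:ℝ) 1) :
    p + t • (q - p) ∈ Omega I :=
  hpq.2.1 (segment_eq_image' ℝ p q ▸ mem_image_of_mem _ ht)

theorem exists_add_smul_mem (hpq : funkLt I p q) : ∃ s > (1:ℝ), p + s • (q - p) ∈ I := by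
  obtain ⟨t, ht, htI⟩ := hpq.2.2
  exact ⟨1 + t, by linarith, by convert htI using 1; module⟩

theorem sub_mem_Dcone (hpq : funkLt I p q) {t : ℝ} (ht : t ∈ Icc (0:ℝ) 1) :
    q - p ∈ Dcone I (p + t • (q - p)) := by
  obtain ⟨s, hs, hsI⟩ := hpq.exists_add_smul_mem
  exact ⟨s - t, by linarith [ht.2], by convert hsI using 1; module⟩

theorem tauF_add_smul (hpq : funkLt I p q) {t : ℝ} (ht : t ∈ Icc (0:ℝ) 1) :
    tauF I (p + t • (q - p)) (q - p) = 1 + funkT0 I p q - t := by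
  obtain ⟨s, hs, hsI⟩ := hpq.exists_add_smul_mem
  have hne : (hitTimes (closure I) p (q - p)).Nonempty :=
    ⟨s, by linarith, subset_closure hsI⟩
  have hshift : ∀ u ∈ Icc (0:ℝ) 1, tauF I (p + u • (q - p)) (q - p) = tauF I p (q - p) - u :=
    fun u hu => csInf_hitTimes_add_smul hu.1
      (fun w hw => hpq.add_smul_mem_Omega ⟨hw.1, hw.2.trans hu.2⟩) hne
  have hq : funkT0 I p q = tauF I (p + (1:ℝ) • (q - p)) (q - p) := by simp [funkT0, tauF]
  rw [hshift t ht, hq, hshift 1 ⟨zero_le_one, le_rfl⟩]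
  ring

theorem funkT0_pos (hpq : funkLt I p q) : 0 < funkT0 I p q := by
  have h1 : (1:ℝ) ∈ Icc (0:ℝ) 1 := ⟨zero_le_one, le_rfl⟩
  have hq := (tauF_mem_hitTimes (hpq.add_smul_mem_Omega h1) (hpq.sub_mem_Dcone h1)).1
  rw [hpq.tauF_add_smul h1] at hq
  linarith

theorem funkF_eq (hpq : funkLt I p q) :
    funkF I p q = log ((1 + funkT0 I p q) / funkT0 I p q) := by
  have ht₀ := hpq.funkT0_pos
  have hv : 0 < ‖q - p‖ := norm_pos_iff.2 (sub_ne_zero.2 hpq.1.symm)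
  have hpb : dist p (funkB I p q) = (1 + funkT0 I p q) * ‖q - p‖ := by
    rw [dist_eq_norm', funkB, show q + funkT0 I p q • (q - p) - p = (1 + funkT0 I p q) • (q - p)
      by module, norm_smul, norm_of_nonneg (by linarith)]
  have hqb : dist q (funkB I p q) = funkT0 I p q * ‖q - p‖ := by
    rw [dist_eq_norm', funkB, add_sub_cancel_left, norm_smul, norm_of_nonneg ht₀.le]
  rw [funkF, if_neg hpq.1, hpb, hqb, mul_div_mul_right _ _ hv.ne']

theorem integral_Pmink_segment (hpq : funkLt I p q) :
    ∫ t in (0:ℝ)..1, Pmink I (p + t • (q - p)) (q - p) = funkF I p q := by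
  have ht₀ := hpq.funkT0_pos
  have hP : EqOn (fun t => Pmink I (p + t • (q - p)) (q - p))
      (fun t => (1 + funkT0 I p q - t)⁻¹) (uIcc 0 1) := fun t ht => by
    rw [uIcc_of_le zero_le_one] at ht
    simp only [Pmink, hpq.tauF_add_smul ht, one_div]
  rw [intervalIntegral.integral_congr hP, intervalIntegral.integral_comp_sub_left
    (fun x => x⁻¹), add_sub_cancel_left, sub_zero, integral_inv_of_pos ht₀ (by linarith),
    hpq.funkF_eq]

theorem exists_supporting (hop : IsOpen I) (hconv : Convex ℝ I) (hpq : funkLt I p q) :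
    ∃ (f : Euc n →L[ℝ] ℝ) (c : ℝ), closure I ⊆ {y | f y ≤ c} ∧ c < f q ∧
      log (f p - c) - log (f q - c) = funkF I p q := by
  have h0 : (0:ℝ) ∈ Icc (0:ℝ) 1 := ⟨le_rfl, zero_le_one⟩
  have hp : p ∈ Omega I := by simpa using hpq.add_smul_mem_Omega h0
  have hD : q - p ∈ Dcone I p := by simpa using hpq.sub_mem_Dcone h0
  have hT : tauF I p (q - p) = 1 + funkT0 I p q := by simpa using hpq.tauF_add_smul h0
  have hbI : p + tauF I p (q - p) • (q - p) ∉ I :=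
    add_csInf_hitTimes_smul_notMem hop subset_closure (tauF_mem_hitTimes hp hD).1
  rw [hT] at hbI
  have ht₀ := hpq.funkT0_pos
  set t₀ := funkT0 I p q
  obtain ⟨f, hf⟩ := geometric_hahn_banach_open_point hconv hop hbI
  obtain ⟨s, hs, hsI⟩ := hpq.exists_add_smul_mem
  have hsT : 1 + t₀ ≤ s := hT ▸ csInf_le bddBelow_hitTimes ⟨by linarith, subset_closure hsI⟩
  have hfs := hf _ hsI
  simp only [map_add, map_smul, smul_eq_mul] at hfs
  have hfv : f (q - p) < 0 := by nlinarith
  have hfp : f p - f (p + (1 + t₀) • (q - p)) = (1 + t₀) * -f (q - p) := by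
    simp only [map_add, map_smul, smul_eq_mul]; ring
  have hfq : f q - f (p + (1 + t₀) • (q - p)) = t₀ * -f (q - p) := by
    simp only [map_add, map_smul, map_sub, smul_eq_mul]; ring
  refine ⟨f, _, closure_minimal (fun y hy => (hf y hy).le) (isClosed_le f.continuous
    continuous_const), by nlinarith, ?_⟩
  rw [hfp, hfq, ← log_div (by nlinarith) (by nlinarith), mul_div_mul_right _ _ (by linarith),
    hpq.funkF_eq]

theorem integral_Pmink_le_funkF (hop : IsOpen I) (hconv : Convex ℝ I) (hpq : funkLt I p q)
    {σ σ' : ℝ → Euc n} (hσ : ∀ t ∈ Icc (0:ℝ) 1, HasDerivAt σ (σ' t) t)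
    (hσ' : ContinuousOn σ' (Icc (0:ℝ) 1)) (h0 : σ 0 = p) (h1 : σ 1 = q)
    (hΩ : ∀ t ∈ Icc (0:ℝ) 1, σ t ∈ Omega I) (hD : ∀ t ∈ Icc (0:ℝ) 1, σ' t ∈ Dcone I (σ t)) :
    ∫ t in (0:ℝ)..1, Pmink I (σ t) (σ' t) ≤ funkF I p q := by
  obtain ⟨f, c, hI, hcq, hlog⟩ := hpq.exists_supporting hop hconv
  subst h0 h1
  exact hlog ▸ integral_Pmink_le_log_sub_log hI hσ hσ' hΩ hD hcq

end funkLt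

theorem funkF_is_sup_of_timelike_lengths_general {n : ℕ} (I : Set (Euc n))
    (hop : IsOpen I) (hconv : Convex ℝ I)
    (p q : Euc n)
    (hpq : funkLt I p q) :
    (∀ σ σ' : ℝ → Euc n,
      (∀ t ∈ Set.Icc (0:ℝ) 1, HasDerivAt σ (σ' t) t) →
      ContinuousOn σ' (Set.Icc (0:ℝ) 1) →
      σ 0 = p → σ 1 = q →
      (∀ t ∈ Set.Icc (0:ℝ) 1, σ t ∈ Omega I) →
      (∀ t ∈ Set.Icc (0:ℝ) 1, σ' t ∈ Dcone I (σ t)) →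
      (∫ t in (0:ℝ)..1, Pmink I (σ t) (σ' t)) ≤ funkF I p q) ∧
    IsGreatest {L : ℝ | ∃ σ σ' : ℝ → Euc n,
      (∀ t ∈ Set.Icc (0:ℝ) 1, HasDerivAt σ (σ' t) t) ∧
      ContinuousOn σ' (Set.Icc (0:ℝ) 1) ∧
      σ 0 = p ∧ σ 1 = q ∧
      (∀ t ∈ Set.Icc (0:ℝ) 1, σ t ∈ Omega I) ∧
      (∀ t ∈ Set.Icc (0:ℝ) 1, σ' t ∈ Dcone I (σ t)) ∧
      L = ∫ t in (0:ℝ)..1, Pmink I (σ t) (σ' t)} (funkF I p q) := by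
  refine ⟨fun _ _ => hpq.integral_Pmink_le_funkF hop hconv,
    ⟨fun t => p + t • (q - p), fun _ => q - p, fun t _ => ?_, continuousOn_const, by simp, by simp,
      fun _ ht => hpq.add_smul_mem_Omega ht, fun _ ht => hpq.sub_mem_Dcone ht,
      hpq.integral_Pmink_segment.symm⟩, ?_⟩
  · simpa using ((hasDerivAt_id t).smul_const (q - p)).const_add p
  · rintro L ⟨σ, σ', hσ, hσ', h0, h1, hΩ, hD, rfl⟩
    exact hpq.integral_Pmink_le_funkF hop hconv hσ hσ' h0 h1 hΩ hD

/-- the timelike Funk metric is the intrinsic timelike Finsler distance of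
the Minkowski functional `P`: every timelike `C¹` curve from `p` to `q` has length at most
`F(p,q)`, and `F(p,q)` is the greatest such length (attained by the straight segment). -/
theorem funkF_is_sup_of_timelike_lengths {n : ℕ} (hn : 1 ≤ n) (I : Set (Euc n))
    (hne : I.Nonempty) (hop : IsOpen I) (hconv : Convex ℝ I)
    (hcl : closure I ≠ Set.univ)
    (p q : Euc n) (hp : p ∈ Omega I) (hq : q ∈ Omega I)
    (hpq : funkLt I p q) :
    (∀ σ σ' : ℝ → Euc n,
      (∀ t ∈ Set.Icc (0:ℝ) 1, HasDerivAt σ (σ' t) t) →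
      ContinuousOn σ' (Set.Icc (0:ℝ) 1) →
      σ 0 = p → σ 1 = q →
      (∀ t ∈ Set.Icc (0:ℝ) 1, σ t ∈ Omega I) →
      (∀ t ∈ Set.Icc (0:ℝ) 1, σ' t ∈ Dcone I (σ t)) →
      (∫ t in (0:ℝ)..1, Pmink I (σ t) (σ' t)) ≤ funkF I p q) ∧
    IsGreatest {L : ℝ | ∃ σ σ' : ℝ → Euc n,
      (∀ t ∈ Set.Icc (0:ℝ) 1, HasDerivAt σ (σ' t) t) ∧
      ContinuousOn σ' (Set.Icc (0:ℝ) 1) ∧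
      σ 0 = p ∧ σ 1 = q ∧
      (∀ t ∈ Set.Icc (0:ℝ) 1, σ t ∈ Omega I) ∧
      (∀ t ∈ Set.Icc (0:ℝ) 1, σ' t ∈ Dcone I (σ t)) ∧
      L = ∫ t in (0:ℝ)..1, Pmink I (σ t) (σ' t)} (funkF I p q) :=
  funkF_is_sup_of_timelike_lengths_general I hop hconv p q hpq
end
end

section
/- Super-level sets of the past-directed timelike Funk distance are convex: for every x ∈ Ω and every real r > 0, the set S_r(x) = {p ∈ Ω : p < x ∧ F(p,x) > r} is a convex subset of E. -/
open RealInnerProductSpace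
open scoped Classical

noncomputable section

/-!
With `t₀ = funkT0 I p x` one has `F(p,x) = log (1 + t₀⁻¹)`, so `r < F(p,x)` says that the ray from
`p` through `x` meets `closure I` at some `x + t • (x - p)` with `e^r - 1 < t⁻¹`. In terms of
`μ = t⁻¹`, the points `p` with this property form `⋃ μ > e^r - 1, x + μ • (x - closure I)`, and such
a union of negatively scaled copies of a convex set is convex, because
`a • (x + μ₁ • (x - y₁)) + b • (x + μ₂ • (x - y₂)) = x + μ • (x - y)` with `μ = a μ₁ + b μ₂` and `y`
a convex combination of `y₁` and `y₂`. The same description with `I` and `μ > 0` captures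
`p < x`: convexity of `closure I` keeps the whole segment `[p, x]` outside `closure I`.
-/

section RayCone

variable {E : Type*} [AddCommGroup E] [Module ℝ E]

/-- Stated as `k < t⁻¹` rather than `t < k⁻¹` so that `k = 0` gives the whole open ray. -/
def pastCone (x : E) (A : Set E) (k : ℝ) : Set E :=
  {p | ∃ t, k < t⁻¹ ∧ x + t • (x - p) ∈ A}

lemma mem_pastCone_zero {x p : E} {A : Set E} :
    p ∈ pastCone x A 0 ↔ ∃ t > (0 : ℝ), x + t • (x - p) ∈ A := by
  simp [pastCone]

lemma convex_pastCone {A : Set E} (hA : Convex ℝ A) (x : E) {k : ℝ} (hk : 0 ≤ k) :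
    Convex ℝ (pastCone x A k) := by
  rintro p₁ ⟨t₁, hk₁, hy₁⟩ p₂ ⟨t₂, hk₂, hy₂⟩ a b ha hb hab
  obtain ⟨μ₁, rfl⟩ : ∃ μ, t₁ = μ⁻¹ := ⟨t₁⁻¹, (inv_inv t₁).symm⟩
  obtain ⟨μ₂, rfl⟩ : ∃ μ, t₂ = μ⁻¹ := ⟨t₂⁻¹, (inv_inv t₂).symm⟩
  rw [inv_inv] at hk₁ hk₂
  have hμ₁ : 0 < μ₁ := hk.trans_lt hk₁
  have hμ₂ : 0 < μ₂ := hk.trans_lt hk₂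
  have hkμ : k < a * μ₁ + b * μ₂ := convex_Ioi k hk₁ hk₂ ha hb hab
  have hμ : 0 < a * μ₁ + b * μ₂ := hk.trans_lt hkμ
  refine ⟨(a * μ₁ + b * μ₂)⁻¹, by rwa [inv_inv], ?_⟩
  have hcomb : x + (a * μ₁ + b * μ₂)⁻¹ • (x - (a • p₁ + b • p₂)) =
      (a * μ₁ / (a * μ₁ + b * μ₂)) • (x + μ₁⁻¹ • (x - p₁)) +
        (b * μ₂ / (a * μ₁ + b * μ₂)) • (x + μ₂⁻¹ • (x - p₂)) := by
    match_scalars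
    · field_simp
      linear_combination -hab
    · field_simp
    · field_simp
  rw [hcomb]
  exact hA hy₁ hy₂ (by positivity) (by positivity) (by field_simp)

lemma segment_subset_compl_of_add_smul_sub_mem {C : Set E} (hC : Convex ℝ C) {x p : E}
    (hx : x ∉ C) {t : ℝ} (ht : 0 < t) (hy : x + t • (x - p) ∈ C) : segment ℝ p x ⊆ Cᶜ := by
  rintro z ⟨u, v, hu, hv, huv, rfl⟩ hz
  rcases hu.eq_or_lt with rfl | hu
  · obtain rfl : v = 1 := by linarith
    simp only [zero_smul, one_smul, zero_add] at hz
    exact hx hz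
  apply hx
  have hx_eq : x = (t / (t + u)) • (u • p + v • x) + (u / (t + u)) • (x + t • (x - p)) := by
    match_scalars
    · field_simp
      linear_combination (-t) * huv
    · field_simp
      ring
  rw [hx_eq]
  exact hC hz hy (by positivity) (by positivity) (by field_simp)

end RayCone

lemma bddBelow_setOf_pos_and (P : ℝ → Prop) : BddBelow {t : ℝ | 0 < t ∧ P t} :=
  ⟨0, fun _ ht => ht.1.le⟩

section Funk

variable {n : ℕ} {I : Set (Euc n)} {p x : Euc n}

lemma funkLt_iff_mem_pastCone (hconv : Convex ℝ I) (hx : x ∈ Omega I) :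
    funkLt I p x ↔ p ∈ pastCone x I 0 := by
  rw [mem_pastCone_zero]
  refine ⟨fun h => h.2.2, fun ⟨t, ht, hy⟩ => ⟨?_, ?_, t, ht, hy⟩⟩
  · rintro rfl
    simp only [sub_self, smul_zero, add_zero] at hy
    exact hx (subset_closure hy)
  · exact segment_subset_compl_of_add_smul_sub_mem hconv.closure hx ht (subset_closure hy)

lemma funkT0_mem (hx : x ∈ Omega I) (h : funkLt I p x) :
    funkT0 I p x ∈ {t : ℝ | 0 < t ∧ x + t • (x - p) ∈ closure I} := by
  have hS : {t : ℝ | 0 < t ∧ x + t • (x - p) ∈ closure I} =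
      Set.Ici 0 ∩ (fun t : ℝ => x + t • (x - p)) ⁻¹' closure I := by
    ext t
    refine ⟨fun ht => ⟨ht.1.le, ht.2⟩, fun ⟨ht, hy⟩ => ⟨ht.lt_of_ne ?_, hy⟩⟩
    rintro rfl
    exact hx (by simpa using hy)
  obtain ⟨-, -, t, ht, hy⟩ := h
  rw [funkT0, hS]
  refine IsClosed.csInf_mem ?_ ⟨t, ht.le, subset_closure hy⟩ ⟨0, fun _ hs => hs.1⟩
  exact isClosed_Ici.inter (isClosed_closure.preimage (by fun_prop))

lemma funkF_eq_log_s15 (hpx : p ≠ x) (ht : 0 < funkT0 I p x) :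
    funkF I p x = Real.log (1 + (funkT0 I p x)⁻¹) := by
  set t₀ := funkT0 I p x
  have hnorm : 0 < ‖x - p‖ := norm_pos_iff.mpr (sub_ne_zero.mpr hpx.symm)
  have hpb : dist p (funkB I p x) = (1 + t₀) * ‖x - p‖ := by
    rw [funkB, dist_eq_norm, show p - (x + t₀ • (x - p)) = -((1 + t₀) • (x - p)) by module,
      norm_neg, norm_smul, Real.norm_of_nonneg (by positivity)]
  have hxb : dist x (funkB I p x) = t₀ * ‖x - p‖ := by
    rw [funkB, dist_eq_norm, show x - (x + t₀ • (x - p)) = -(t₀ • (x - p)) by abel,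
      norm_neg, norm_smul, Real.norm_of_nonneg ht.le]
  rw [funkF, if_neg hpx, hpb, hxb, mul_div_mul_right _ _ hnorm.ne', add_div, div_self ht.ne',
    one_div, add_comm]

lemma lt_funkF_iff_mem_pastCone (hx : x ∈ Omega I) (h : funkLt I p x) {r : ℝ} (hr : 0 < r) :
    r < funkF I p x ↔ p ∈ pastCone x (closure I) (Real.exp r - 1) := by
  obtain ⟨ht₀, -⟩ := funkT0_mem hx h
  have hk : 0 < Real.exp r - 1 := by linarith [Real.add_one_lt_exp hr.ne']
  obtain ⟨hpx, -, t, ht, hy⟩ := h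
  have hne : {t : ℝ | 0 < t ∧ x + t • (x - p) ∈ closure I}.Nonempty :=
    ⟨t, ht, subset_closure hy⟩
  rw [funkF_eq_log_s15 hpx ht₀, Real.lt_log_iff_exp_lt (by positivity), ← sub_lt_iff_lt_add',
    lt_inv_comm₀ hk ht₀, funkT0, csInf_lt_iff (bddBelow_setOf_pos_and _) hne]
  refine ⟨fun ⟨s, ⟨hs, hys⟩, hsk⟩ => ⟨s, (lt_inv_comm₀ hk hs).mpr hsk, hys⟩,
    fun ⟨s, hks, hys⟩ => ?_⟩
  have hs : 0 < s := inv_pos.mp (hk.trans hks)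
  exact ⟨s, ⟨hs, hys⟩, (lt_inv_comm₀ hk hs).mp hks⟩

end Funk

theorem convex_funkF_superlevel_general {n : ℕ} (I : Set (Euc n)) (hconv : Convex ℝ I)
    (x : Euc n) (hx : x ∈ Omega I) (r : ℝ) (hr : 0 < r) :
    Convex ℝ {p | p ∈ Omega I ∧ funkLt I p x ∧ r < funkF I p x} := by
  have hset : {p | p ∈ Omega I ∧ funkLt I p x ∧ r < funkF I p x} =
      pastCone x I 0 ∩ pastCone x (closure I) (Real.exp r - 1) := by
    ext p
    refine ⟨fun ⟨_, hlt, hF⟩ => ⟨(funkLt_iff_mem_pastCone hconv hx).mp hlt,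
      (lt_funkF_iff_mem_pastCone hx hlt hr).mp hF⟩, fun ⟨hI, hcl⟩ => ?_⟩
    have hlt := (funkLt_iff_mem_pastCone hconv hx).mpr hI
    exact ⟨hlt.2.1 (left_mem_segment ℝ p x), hlt, (lt_funkF_iff_mem_pastCone hx hlt hr).mpr hcl⟩
  rw [hset]
  exact (convex_pastCone hconv x le_rfl).inter
    (convex_pastCone hconv.closure x (by linarith [Real.add_one_lt_exp hr.ne']))

/-- super-level sets of the past-directed timelike Funk distance are
convex: for `x ∈ Ω` and `r > 0`, the set `{p ∈ Ω | p < x ∧ F(p,x) > r}` is convex. -/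
theorem convex_funkF_superlevel {n : ℕ} (hn : 1 ≤ n) (I : Set (Euc n))
    (hne : I.Nonempty) (hop : IsOpen I) (hconv : Convex ℝ I)
    (hcl : closure I ≠ Set.univ)
    (x : Euc n) (hx : x ∈ Omega I) (r : ℝ) (hr : 0 < r) :
    Convex ℝ {p | p ∈ Omega I ∧ funkLt I p x ∧ r < funkF I p x} :=
  convex_funkF_superlevel_general I hconv x hx r hr
end
end
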